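/- arXiv:math/0309345 — 2 statements merged into one kernel-verified Lean document; each statement's English description precedes it below -/
import Mathlib

section
/- Let T be a recursively axiomatizable extension of Robinson arithmetic Q, with φ chosen to be a Σ₁ formula defining the relation B. If T is ω-consistent, then T does not prove φ(n,t). -/
namespace Boolos

/-- Terms of the first-order language of arithmetic: variables v₀,v₁,…, 0, successor s, +, ·. -/
inductive Term : Type
  | var : ℕ → Term
  | zero : Term
  | succ : Term → Term
  | add : Term → Term → Term
  | mul : Term → Term → Term
  deriving DecidableEq

/-- Formulas of the first-order language of arithmetic. -/
inductive Formula : Type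
  | eq : Term → Term → Formula
  | lt : Term → Term → Formula
  | not : Formula → Formula
  | and : Formula → Formula → Formula
  | or : Formula → Formula → Formula
  | imp : Formula → Formula → Formula
  | all : ℕ → Formula → Formula
  | ex : ℕ → Formula → Formula
  deriving DecidableEq

/-- The primitive symbols of the language (finitely many apart from the variables). -/
inductive Symbol : Type
  | zero : Symbol
  | succ : Symbol
  | plus : Symbol
  | times : Symbol
  | eqs : Symbol
  | lts : Symbol
  | nots : Symbol
  | ands : Symbol
  | ors : Symbol
  | imps : Symbol
  | alls : Symbol
  | exs : Symbol
  | var : ℕ → Symbol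
  deriving DecidableEq

/-- Gödel numbers of the primitive symbols. -/
def Symbol.code : Symbol → ℕ
  | .zero => 1
  | .succ => 2
  | .plus => 3
  | .times => 4
  | .eqs => 5
  | .lts => 6
  | .nots => 7
  | .ands => 8
  | .ors => 9
  | .imps => 10
  | .alls => 11
  | .exs => 12
  | .var n => 13 + n

/-- The sequence of symbols occurring in a term. -/
def Term.symbols : Term → List Symbol
  | .var i => [.var i]
  | .zero => [.zero]
  | .succ t => .succ :: t.symbols
  | .add t u => t.symbols ++ .plus :: u.symbols
  | .mul t u => t.symbols ++ .times :: u.symbols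

/-- The sequence of symbols occurring in a formula. -/
def Formula.symbols : Formula → List Symbol
  | .eq t u => t.symbols ++ .eqs :: u.symbols
  | .lt t u => t.symbols ++ .lts :: u.symbols
  | .not φ => .nots :: φ.symbols
  | .and φ ψ => φ.symbols ++ .ands :: ψ.symbols
  | .or φ ψ => φ.symbols ++ .ors :: ψ.symbols
  | .imp φ ψ => φ.symbols ++ .imps :: ψ.symbols
  | .all i φ => .alls :: .var i :: φ.symbols
  | .ex i φ => .exs :: .var i :: φ.symbols

/-- |e| : the length (number of symbols) of a term. -/
def Term.length (t : Term) : ℕ := t.symbols.length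

/-- |μ| : the length (number of symbols) of a formula. -/
def Formula.length (φ : Formula) : ℕ := φ.symbols.length

/-- A fixed standard (pairing-based, injective) Gödel numbering of terms. -/
def Term.code : Term → ℕ
  | .var i => Nat.pair 0 i
  | .zero => Nat.pair 1 0
  | .succ t => Nat.pair 2 t.code
  | .add t u => Nat.pair 3 (Nat.pair t.code u.code)
  | .mul t u => Nat.pair 4 (Nat.pair t.code u.code)

/-- ⌜μ⌝ : the Gödel number of a formula. -/
def Formula.gnum : Formula → ℕ
  | .eq t u => Nat.pair 0 (Nat.pair t.code u.code)
  | .lt t u => Nat.pair 1 (Nat.pair t.code u.code)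
  | .not φ => Nat.pair 2 φ.gnum
  | .and φ ψ => Nat.pair 3 (Nat.pair φ.gnum ψ.gnum)
  | .or φ ψ => Nat.pair 4 (Nat.pair φ.gnum ψ.gnum)
  | .imp φ ψ => Nat.pair 5 (Nat.pair φ.gnum ψ.gnum)
  | .all i φ => Nat.pair 6 (Nat.pair i φ.gnum)
  | .ex i φ => Nat.pair 7 (Nat.pair i φ.gnum)

/-- The variables occurring in a term. -/
def Term.varsOf : Term → Finset ℕ
  | .var i => {i}
  | .zero => ∅
  | .succ t => t.varsOf
  | .add t u => t.varsOf ∪ u.varsOf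
  | .mul t u => t.varsOf ∪ u.varsOf

/-- All variables (free or bound) occurring in a formula. -/
def Formula.allVars : Formula → Finset ℕ
  | .eq t u => t.varsOf ∪ u.varsOf
  | .lt t u => t.varsOf ∪ u.varsOf
  | .not φ => φ.allVars
  | .and φ ψ => φ.allVars ∪ ψ.allVars
  | .or φ ψ => φ.allVars ∪ ψ.allVars
  | .imp φ ψ => φ.allVars ∪ ψ.allVars
  | .all i φ => insert i φ.allVars
  | .ex i φ => insert i φ.allVars

/-- The free variables of a formula. -/
def Formula.freeVars : Formula → Finset ℕ
  | .eq t u => t.varsOf ∪ u.varsOf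
  | .lt t u => t.varsOf ∪ u.varsOf
  | .not φ => φ.freeVars
  | .and φ ψ => φ.freeVars ∪ ψ.freeVars
  | .or φ ψ => φ.freeVars ∪ ψ.freeVars
  | .imp φ ψ => φ.freeVars ∪ ψ.freeVars
  | .all i φ => φ.freeVars.erase i
  | .ex i φ => φ.freeVars.erase i

/-- Substitution of a term for a variable in a term. -/
def Term.subst : Term → ℕ → Term → Term
  | .var i, x, s => if i = x then s else .var i
  | .zero, _, _ => .zero
  | .succ t, x, s => .succ (t.subst x s)
  | .add t u, x, s => .add (t.subst x s) (u.subst x s)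
  | .mul t u, x, s => .mul (t.subst x s) (u.subst x s)

/-- Substitution of a term for the free occurrences of a variable in a formula. -/
def Formula.subst : Formula → ℕ → Term → Formula
  | .eq t u, x, s => .eq (t.subst x s) (u.subst x s)
  | .lt t u, x, s => .lt (t.subst x s) (u.subst x s)
  | .not φ, x, s => .not (φ.subst x s)
  | .and φ ψ, x, s => .and (φ.subst x s) (ψ.subst x s)
  | .or φ ψ, x, s => .or (φ.subst x s) (ψ.subst x s)
  | .imp φ ψ, x, s => .imp (φ.subst x s) (ψ.subst x s)
  | .all i φ, x, s => if i = x then .all i φ else .all i (φ.subst x s)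
  | .ex i φ, x, s => if i = x then .ex i φ else .ex i (φ.subst x s)

/-- The number of occurrences of a variable in a term. -/
def Term.countOcc : Term → ℕ → ℕ
  | .var i, x => if i = x then 1 else 0
  | .zero, _ => 0
  | .succ t, x => t.countOcc x
  | .add t u, x => t.countOcc x + u.countOcc x
  | .mul t u, x => t.countOcc x + u.countOcc x

/-- The number of free occurrences of a variable in a formula. -/
def Formula.countFreeOcc : Formula → ℕ → ℕ
  | .eq t u, x => t.countOcc x + u.countOcc x
  | .lt t u, x => t.countOcc x + u.countOcc x
  | .not φ, x => φ.countFreeOcc x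
  | .and φ ψ, x => φ.countFreeOcc x + ψ.countFreeOcc x
  | .or φ ψ, x => φ.countFreeOcc x + ψ.countFreeOcc x
  | .imp φ ψ, x => φ.countFreeOcc x + ψ.countFreeOcc x
  | .all i φ, x => if i = x then 0 else φ.countFreeOcc x
  | .ex i φ, x => if i = x then 0 else φ.countFreeOcc x

/-- The numeral s s … s 0 for a natural number. -/
def numeral : ℕ → Term
  | 0 => .zero
  | n + 1 => .succ (numeral n)

/-- Structures for the language of arithmetic. -/
structure Struct where
  carrier : Type
  zero : carrier
  succ : carrier → carrier
  add : carrier → carrier → carrier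
  mul : carrier → carrier → carrier
  lt : carrier → carrier → Prop

/-- The value of a term in a structure under an assignment. -/
def Term.val (M : Struct) (v : ℕ → M.carrier) : Term → M.carrier
  | .var i => v i
  | .zero => M.zero
  | .succ t => M.succ (Term.val M v t)
  | .add t u => M.add (Term.val M v t) (Term.val M v u)
  | .mul t u => M.mul (Term.val M v t) (Term.val M v u)

/-- Satisfaction of a formula in a structure under an assignment. -/
def Formula.Realize (M : Struct) : (ℕ → M.carrier) → Formula → Prop
  | v, .eq t u => Term.val M v t = Term.val M v u
  | v, .lt t u => M.lt (Term.val M v t) (Term.val M v u)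
  | v, .not φ => ¬ Formula.Realize M v φ
  | v, .and φ ψ => Formula.Realize M v φ ∧ Formula.Realize M v ψ
  | v, .or φ ψ => Formula.Realize M v φ ∨ Formula.Realize M v ψ
  | v, .imp φ ψ => Formula.Realize M v φ → Formula.Realize M v ψ
  | v, .all i φ => ∀ a : M.carrier, Formula.Realize M (Function.update v i a) φ
  | v, .ex i φ => ∃ a : M.carrier, Formula.Realize M (Function.update v i a) φ

/-- ω : the standard model of arithmetic. -/
@[reducible] def stdModel : Struct :=
  { carrier := ℕ, zero := 0, succ := Nat.succ, add := (· + ·), mul := (· * ·),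
    lt := (· < ·) }

/-- A formula is true if it holds in the standard model ω (under every assignment). -/
def IsTrue (φ : Formula) : Prop := ∀ v : ℕ → ℕ, Formula.Realize stdModel v φ

/-- The value of a (closed) term in the standard model ω. -/
def Term.valNat (t : Term) : ℕ := Term.val stdModel (fun _ => 0) t

/-- A sentence is a formula with no free variables. -/
def Formula.IsSentence (φ : Formula) : Prop := φ.freeVars = ∅

/-- Provability from a theory; by the Gödel completeness theorem, identified with
semantic consequence. -/
def Proves (T : Set Formula) (φ : Formula) : Prop :=
  ∀ (M : Struct) (v : ℕ → M.carrier),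
    (∀ ψ ∈ T, Formula.Realize M v ψ) → Formula.Realize M v φ

/-- Consistency: no formula is both provable and refutable. -/
def Consistent (T : Set Formula) : Prop :=
  ¬ ∃ φ : Formula, Proves T φ ∧ Proves T (.not φ)

/-- The biconditional, as an abbreviation. -/
def Formula.iffF (φ ψ : Formula) : Formula := .and (.imp φ ψ) (.imp ψ φ)

def v0 : Term := .var 0
def v1 : Term := .var 1
def v2 : Term := .var 2

/-- The axioms of Robinson arithmetic Q (with < defined as usual). -/
def QAxioms : Set Formula :=
  { .all 0 (.all 1 (.imp (.eq (.succ v0) (.succ v1)) (.eq v0 v1))),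
    .all 0 (.not (.eq (.succ v0) .zero)),
    .all 0 (.imp (.not (.eq v0 .zero)) (.ex 1 (.eq v0 (.succ v1)))),
    .all 0 (.eq (.add v0 .zero) v0),
    .all 0 (.all 1 (.eq (.add v0 (.succ v1)) (.succ (.add v0 v1)))),
    .all 0 (.eq (.mul v0 .zero) .zero),
    .all 0 (.all 1 (.eq (.mul v0 (.succ v1)) (.add (.mul v0 v1) v0))),
    .all 0 (.all 1 (Formula.iffF (.lt v0 v1) (.ex 2 (.eq (.add v2 (.succ v0)) v1)))) }

/-- Pr_S : the set of Gödel numbers of sentences provable in S. -/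
def PrSet (T : Set Formula) : Set ℕ :=
  {m | ∃ σ : Formula, σ.IsSentence ∧ Proves T σ ∧ m = σ.gnum}

/-- A formula μ with at most the free variable v₀ names the number i in T
if T ⊢ (∀v₀)(μ(v₀) ↔ v₀ = i). -/
def Names (T : Set Formula) (μ : Formula) (i : ℕ) : Prop :=
  μ.freeVars ⊆ {0} ∧ Proves T (.all 0 (Formula.iffF μ (.eq v0 (numeral i))))

/-- i is named in T by some formula of length < m. -/
def Nameable (T : Set Formula) (m i : ℕ) : Prop :=
  ∃ μ : Formula, μ.length < m ∧ Names T μ i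

/-- φ(v₀) defines the set A in the standard model ω. -/
def DefinesSet (φ : Formula) (A : Set ℕ) : Prop :=
  φ.freeVars ⊆ {0} ∧ ∀ i : ℕ, i ∈ A ↔ IsTrue (φ.subst 0 (numeral i))

/-- A set of natural numbers is definable (in ω). -/
def Definable (A : Set ℕ) : Prop := ∃ φ : Formula, DefinesSet φ A

/-- φ(v₀,v₁) defines the binary relation R in the standard model ω. -/
def DefinesRel (φ : Formula) (R : ℕ → ℕ → Prop) : Prop :=
  φ.freeVars ⊆ {0, 1} ∧
    ∀ i j : ℕ, R i j ↔ IsTrue ((φ.subst 0 (numeral i)).subst 1 (numeral j))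

/-- The relation B of Boolos's construction: (i,j) ∈ B iff some formula μ with at most
the free variable v₀, with ⌜μ⌝ < g(j) and |μ| < j, names i. -/
def BRel (T : Set Formula) (g : ℕ → ℕ) (i j : ℕ) : Prop :=
  ∃ μ : Formula, μ.gnum < g j ∧ μ.length < j ∧ Names T μ i

/-- g is a recursive function bounding Gödel numbers in terms of length, as in the
construction: whenever all variables of μ are among the first j ones and |μ| < j,
we have ⌜μ⌝ < g(j). -/
def GoodBound (g : ℕ → ℕ) : Prop :=
  Computable g ∧
    ∀ (μ : Formula) (j : ℕ), μ.allVars ⊆ Finset.range j → μ.length < j → μ.gnum < g j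

/-- ψ(v₀,v₁) ≔ ¬φ(v₀,v₁) ∧ (∀v₂ < v₀) φ(v₂,v₁). -/
def psiOf (φ : Formula) : Formula :=
  .and (.not φ) (.all 2 (.imp (.lt v2 v0) (φ.subst 0 v2)))

/-- The closed term t ≔ 10·(k·k). -/
def tTerm (k : ℕ) : Term := .mul (numeral 10) (.mul (numeral k) (numeral k))

/-- T is recursively axiomatizable: it has an axiom set (of sentences) whose set of
Gödel numbers is recursive and which has the same theorems as T. -/
def RecursivelyAxiomatizable (T : Set Formula) : Prop :=
  ∃ A : Set Formula, (∀ σ ∈ A, σ.IsSentence) ∧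
    ComputablePred (fun m : ℕ => ∃ σ ∈ A, m = σ.gnum) ∧
    ∀ φ : Formula, Proves A φ ↔ Proves T φ

/-- Δ₀ (bounded) formulas. -/
inductive IsDelta0 : Formula → Prop
  | eq (t u : Term) : IsDelta0 (.eq t u)
  | lt (t u : Term) : IsDelta0 (.lt t u)
  | not {φ : Formula} : IsDelta0 φ → IsDelta0 (.not φ)
  | and {φ ψ : Formula} : IsDelta0 φ → IsDelta0 ψ → IsDelta0 (.and φ ψ)
  | or {φ ψ : Formula} : IsDelta0 φ → IsDelta0 ψ → IsDelta0 (.or φ ψ)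
  | imp {φ ψ : Formula} : IsDelta0 φ → IsDelta0 ψ → IsDelta0 (.imp φ ψ)
  | ball {φ : Formula} (i : ℕ) (t : Term) : i ∉ t.varsOf → IsDelta0 φ →
      IsDelta0 (.all i (.imp (.lt (.var i) t) φ))
  | bex {φ : Formula} (i : ℕ) (t : Term) : i ∉ t.varsOf → IsDelta0 φ →
      IsDelta0 (.ex i (.and (.lt (.var i) t) φ))

/-- A formula is Σ₁ if it is of the form (∃vᵢ)μ for a Δ₀ formula μ. -/
def IsSigma1 (φ : Formula) : Prop := ∃ (i : ℕ) (μ : Formula), IsDelta0 μ ∧ φ = .ex i μ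

/-- T is ω-consistent if T ⊢ (∃vᵢ)η(vᵢ) implies T ⊬ ¬η(j) for some number j. -/
def OmegaConsistent (T : Set Formula) : Prop :=
  ∀ (i : ℕ) (η : Formula), Proves T (.ex i η) →
    ∃ j : ℕ, ¬ Proves T (.not (η.subst i (numeral j)))

/-! ### Auxiliary lemmas -/

lemma val_congr (M : Struct) (t : Term) {w w' : ℕ → M.carrier}
    (h : ∀ x ∈ t.varsOf, w x = w' x) : Term.val M w t = Term.val M w' t := by
  induction t with
  | var i => exact h i (by simp [Term.varsOf])
  | zero => rfl
  | succ t ih =>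
      simp only [Term.varsOf] at h
      simp only [Term.val, ih h]
  | add t u iht ihu =>
      simp only [Term.varsOf, Finset.mem_union] at h
      simp only [Term.val, iht fun x hx => h x (Or.inl hx), ihu fun x hx => h x (Or.inr hx)]
  | mul t u iht ihu =>
      simp only [Term.varsOf, Finset.mem_union] at h
      simp only [Term.val, iht fun x hx => h x (Or.inl hx), ihu fun x hx => h x (Or.inr hx)]

lemma realize_congr (M : Struct) (φ : Formula) : ∀ {w w' : ℕ → M.carrier},
    (∀ x ∈ φ.freeVars, w x = w' x) → (Formula.Realize M w φ ↔ Formula.Realize M w' φ) := by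
  induction φ with
  | eq t u =>
      intro w w' h
      simp only [Formula.freeVars, Finset.mem_union] at h
      simp only [Formula.Realize,
        val_congr M t fun x hx => h x (Or.inl hx),
        val_congr M u fun x hx => h x (Or.inr hx)]
  | lt t u =>
      intro w w' h
      simp only [Formula.freeVars, Finset.mem_union] at h
      simp only [Formula.Realize,
        val_congr M t fun x hx => h x (Or.inl hx),
        val_congr M u fun x hx => h x (Or.inr hx)]
  | not φ ih =>
      intro w w' h
      simp only [Formula.freeVars] at h
      simp only [Formula.Realize, ih h]
  | and φ ψ ihφ ihψ =>
      intro w w' h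
      simp only [Formula.freeVars, Finset.mem_union] at h
      simp only [Formula.Realize, ihφ fun x hx => h x (Or.inl hx), ihψ fun x hx => h x (Or.inr hx)]
  | or φ ψ ihφ ihψ =>
      intro w w' h
      simp only [Formula.freeVars, Finset.mem_union] at h
      simp only [Formula.Realize, ihφ fun x hx => h x (Or.inl hx), ihψ fun x hx => h x (Or.inr hx)]
  | imp φ ψ ihφ ihψ =>
      intro w w' h
      simp only [Formula.freeVars, Finset.mem_union] at h
      simp only [Formula.Realize, ihφ fun x hx => h x (Or.inl hx), ihψ fun x hx => h x (Or.inr hx)]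
  | all i φ ih =>
      intro w w' h
      simp only [Formula.freeVars] at h
      simp only [Formula.Realize]
      refine forall_congr' fun a => ih fun x hx => ?_
      by_cases hxi : x = i
      · subst hxi; simp
      · simp only [Function.update_of_ne hxi]
        exact h x (Finset.mem_erase.mpr ⟨hxi, hx⟩)
  | ex i φ ih =>
      intro w w' h
      simp only [Formula.freeVars] at h
      simp only [Formula.Realize]
      refine exists_congr fun a => ih fun x hx => ?_
      by_cases hxi : x = i
      · subst hxi; simp
      · simp only [Function.update_of_ne hxi]
        exact h x (Finset.mem_erase.mpr ⟨hxi, hx⟩)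

lemma val_of_closed (M : Struct) (s : Term) (hs : s.varsOf = ∅) (w w' : ℕ → M.carrier) :
    Term.val M w s = Term.val M w' s :=
  val_congr M s fun x hx => by rw [hs] at hx; exact absurd hx (Finset.notMem_empty x)

lemma val_subst (M : Struct) (w : ℕ → M.carrier) (s : Term) (x : ℕ) (t : Term) :
    Term.val M w (t.subst x s) = Term.val M (Function.update w x (Term.val M w s)) t := by
  induction t with
  | var i =>
      by_cases hi : i = x
      · subst hi; simp [Term.subst, Term.val]
      · simp [Term.subst, hi, Term.val, Function.update_of_ne hi]
  | zero => rfl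
  | succ t ih => simp only [Term.subst, Term.val, ih]
  | add t u iht ihu => simp only [Term.subst, Term.val, iht, ihu]
  | mul t u iht ihu => simp only [Term.subst, Term.val, iht, ihu]

lemma realize_subst (M : Struct) (s : Term) (hs : s.varsOf = ∅) (μ : Formula) :
    ∀ (w : ℕ → M.carrier) (x : ℕ),
      Formula.Realize M w (μ.subst x s) ↔
        Formula.Realize M (Function.update w x (Term.val M w s)) μ := by
  induction μ with
  | eq t u => intro w x; simp only [Formula.subst, Formula.Realize, val_subst]
  | lt t u => intro w x; simp only [Formula.subst, Formula.Realize, val_subst]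
  | not φ ih => intro w x; simp only [Formula.subst, Formula.Realize, ih]
  | and φ ψ ihφ ihψ => intro w x; simp only [Formula.subst, Formula.Realize, ihφ, ihψ]
  | or φ ψ ihφ ihψ => intro w x; simp only [Formula.subst, Formula.Realize, ihφ, ihψ]
  | imp φ ψ ihφ ihψ => intro w x; simp only [Formula.subst, Formula.Realize, ihφ, ihψ]
  | all i φ ih =>
      intro w x
      by_cases hix : i = x
      · subst hix
        simp only [Formula.subst, if_pos rfl, Formula.Realize]
        refine forall_congr' fun a => realize_congr M φ fun y hy => ?_
        by_cases hyi : y = i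
        · subst hyi; simp
        · simp [Function.update_of_ne hyi]
      · simp only [Formula.subst, if_neg hix, Formula.Realize]
        refine forall_congr' fun a => (ih _ _).trans (realize_congr M φ fun y hy => ?_)
        have hsv : Term.val M (Function.update w i a) s = Term.val M w s :=
          val_of_closed M s hs _ _
        by_cases hyx : y = x
        · subst hyx
          have hyi : y ≠ i := fun h => hix h.symm
          simp [Function.update_of_ne hyi, hsv]
        · by_cases hyi : y = i
          · subst hyi
            simp [Function.update_of_ne hyx]
          · simp [Function.update_of_ne hyx, Function.update_of_ne hyi]
  | ex i φ ih =>
      intro w x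
      by_cases hix : i = x
      · subst hix
        simp only [Formula.subst, if_pos rfl, Formula.Realize]
        refine exists_congr fun a => realize_congr M φ fun y hy => ?_
        by_cases hyi : y = i
        · subst hyi; simp
        · simp [Function.update_of_ne hyi]
      · simp only [Formula.subst, if_neg hix, Formula.Realize]
        refine exists_congr fun a => (ih _ _).trans (realize_congr M φ fun y hy => ?_)
        have hsv : Term.val M (Function.update w i a) s = Term.val M w s :=
          val_of_closed M s hs _ _
        by_cases hyx : y = x
        · subst hyx
          have hyi : y ≠ i := fun h => hix h.symm
          simp [Function.update_of_ne hyi, hsv]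
        · by_cases hyi : y = i
          · subst hyi
            simp [Function.update_of_ne hyx]
          · simp [Function.update_of_ne hyx, Function.update_of_ne hyi]

/-- The canonical embedding of ℕ into a structure. -/
def emb (M : Struct) : ℕ → M.carrier
  | 0 => M.zero
  | m + 1 => M.succ (emb M m)

lemma numeral_closed (m : ℕ) : (numeral m).varsOf = ∅ := by
  induction m with
  | zero => rfl
  | succ m ih => simpa [numeral, Term.varsOf] using ih

lemma tTerm_closed (k : ℕ) : (tTerm k).varsOf = ∅ := by
  simp [tTerm, Term.varsOf, numeral_closed]

lemma val_numeral (M : Struct) (w : ℕ → M.carrier) (m : ℕ) :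
    Term.val M w (numeral m) = emb M m := by
  induction m with
  | zero => rfl
  | succ m ih => simp only [numeral, Term.val, ih, emb]

lemma emb_std (m : ℕ) : emb stdModel m = m := by
  induction m with
  | zero => rfl
  | succ m ih => simp [emb, ih]

/-- Basic first-order consequences of the axioms of Q in a model. -/
structure QM (M : Struct) : Prop where
  succ_inj : ∀ x y : M.carrier, M.succ x = M.succ y → x = y
  succ_ne : ∀ x : M.carrier, M.succ x ≠ M.zero
  pred : ∀ x : M.carrier, x ≠ M.zero → ∃ y, x = M.succ y
  add_zero : ∀ x : M.carrier, M.add x M.zero = x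
  add_succ : ∀ x y : M.carrier, M.add x (M.succ y) = M.succ (M.add x y)
  mul_zero : ∀ x : M.carrier, M.mul x M.zero = M.zero
  mul_succ : ∀ x y : M.carrier, M.mul x (M.succ y) = M.add (M.mul x y) x
  lt_iff : ∀ x y : M.carrier, M.lt x y ↔ ∃ c, M.add c (M.succ x) = y

lemma qm_of (M : Struct) (v₀ : ℕ → M.carrier)
    (hQ : ∀ σ ∈ QAxioms, Formula.Realize M v₀ σ) : QM M := by
  have h1 := hQ (.all 0 (.all 1 (.imp (.eq (.succ v0) (.succ v1)) (.eq v0 v1))))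
    (by simp [QAxioms])
  have h2 := hQ (.all 0 (.not (.eq (.succ v0) .zero))) (by simp [QAxioms])
  have h3 := hQ (.all 0 (.imp (.not (.eq v0 .zero)) (.ex 1 (.eq v0 (.succ v1)))))
    (by simp [QAxioms])
  have h4 := hQ (.all 0 (.eq (.add v0 .zero) v0)) (by simp [QAxioms])
  have h5 := hQ (.all 0 (.all 1 (.eq (.add v0 (.succ v1)) (.succ (.add v0 v1)))))
    (by simp [QAxioms])
  have h6 := hQ (.all 0 (.eq (.mul v0 .zero) .zero)) (by simp [QAxioms])
  have h7 := hQ (.all 0 (.all 1 (.eq (.mul v0 (.succ v1)) (.add (.mul v0 v1) v0))))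
    (by simp [QAxioms])
  have h8 := hQ (.all 0 (.all 1 (Formula.iffF (.lt v0 v1)
      (.ex 2 (.eq (.add v2 (.succ v0)) v1))))) (by simp [QAxioms])
  simp only [Formula.Realize, Term.val, Formula.iffF, v0, v1, v2, Function.update] at h1 h2 h3 h4 h5 h6 h7 h8
  constructor
  · intro x y; have := h1 x y; simpa using this
  · intro x; have := h2 x; simpa using this
  · intro x hx
    have := h3 x; simp at this
    obtain ⟨y, hy⟩ := this hx
    exact ⟨y, by simpa using hy⟩
  · intro x; have := h4 x; simpa using this
  · intro x y; have := h5 x y; simpa using this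
  · intro x; have := h6 x; simpa using this
  · intro x y; have := h7 x y; simpa using this
  · intro x y
    have := h8 x y; simp at this
    constructor
    · intro h; obtain ⟨c, hc⟩ := this.1 h; exact ⟨c, by simpa using hc⟩
    · rintro ⟨c, hc⟩; exact this.2 c (by simpa using hc)

namespace QM

variable {M : Struct} (h : QM M)
include h

lemma emb_add (a b : ℕ) : M.add (emb M a) (emb M b) = emb M (a + b) := by
  induction b with
  | zero => simpa [emb] using h.add_zero (emb M a)
  | succ b ih => simp only [emb, h.add_succ, ih]; rfl

lemma emb_mul (a b : ℕ) : M.mul (emb M a) (emb M b) = emb M (a * b) := by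
  induction b with
  | zero => simpa [emb] using h.mul_zero (emb M a)
  | succ b ih =>
      simp only [emb, h.mul_succ, ih, h.emb_add]
      rw [Nat.mul_succ]

lemma emb_inj : ∀ {a b : ℕ}, emb M a = emb M b → a = b := by
  intro a
  induction a with
  | zero =>
      intro b hb
      cases b with
      | zero => rfl
      | succ b => exact absurd hb.symm (h.succ_ne _)
  | succ a ih =>
      intro b hb
      cases b with
      | zero => exact absurd hb (h.succ_ne _)
      | succ b => exact congrArg Nat.succ (ih (h.succ_inj _ _ hb))

omit h in
lemma emb_eq_iter (m : ℕ) : emb M m = M.succ^[m] M.zero := by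
  induction m with
  | zero => rfl
  | succ m ih => simp [emb, ih, Function.iterate_succ_apply']

lemma add_emb (m : ℕ) (c : M.carrier) : M.add c (emb M m) = M.succ^[m] c := by
  induction m with
  | zero => exact h.add_zero c
  | succ m ih => simp only [emb, h.add_succ, ih, Function.iterate_succ_apply']

lemma iter_ne (q : ℕ) : ∀ (p : ℕ) (c : M.carrier),
    M.succ^[p + q + 1] c ≠ M.succ^[q] M.zero := by
  induction q with
  | zero =>
      intro p c hc
      rw [Function.iterate_succ_apply'] at hc
      exact h.succ_ne _ hc
  | succ q ih =>
      intro p c hc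
      rw [show p + (q + 1) + 1 = (p + q + 1) + 1 by omega] at hc
      rw [Function.iterate_succ_apply' M.succ (p + q + 1) c,
        Function.iterate_succ_apply' M.succ q M.zero] at hc
      exact ih p c (h.succ_inj _ _ hc)

lemma emb_lt_iff (a b : ℕ) : M.lt (emb M a) (emb M b) ↔ a < b := by
  rw [h.lt_iff]
  constructor
  · rintro ⟨c, hc⟩
    by_contra hab
    push_neg at hab
    have : M.add c (emb M (a + 1)) = emb M b := by
      simpa [emb, h.add_succ, h.add_emb] using hc
    rw [h.add_emb, emb_eq_iter] at this
    exact h.iter_ne b (a - b) c (by rw [show a - b + b + 1 = a + 1 by omega]; exact this) 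
  · intro hab
    refine ⟨emb M (b - (a + 1)), ?_⟩
    have : M.add (emb M (b - (a+1))) (emb M (a + 1)) = emb M b := by
      rw [h.emb_add, show b - (a+1) + (a+1) = b by omega]
    simpa [emb, h.add_succ, h.add_emb] using this

lemma lt_emb_elim : ∀ (b : ℕ) (x : M.carrier), M.lt x (emb M b) → ∃ a < b, x = emb M a := by
  intro b
  induction b with
  | zero =>
      intro x hx
      rw [h.lt_iff] at hx
      obtain ⟨c, hc⟩ := hx
      rw [h.add_succ] at hc
      exact absurd hc (h.succ_ne _)
  | succ b ih =>
      intro x hx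
      rw [h.lt_iff] at hx
      obtain ⟨c, hc⟩ := hx
      rw [h.add_succ] at hc
      have hc' : M.add c x = emb M b := h.succ_inj _ _ hc
      by_cases hx0 : x = M.zero
      · exact ⟨0, Nat.succ_pos b, hx0⟩
      · obtain ⟨y, hy⟩ := h.pred x hx0
        have : M.lt y (emb M b) := by
          rw [h.lt_iff]
          exact ⟨c, by rw [← hy]; exact hc'⟩
        obtain ⟨a, hab, ha⟩ := ih y this
        exact ⟨a + 1, by omega, by rw [hy, ha]; rfl⟩

lemma val_emb (w : ℕ → ℕ) (t : Term) :
    Term.val M (fun x => emb M (w x)) t = emb M (Term.val stdModel w t) := by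
  induction t with
  | var i => rfl
  | zero => rfl
  | succ t ih => simp only [Term.val, ih]; rfl
  | add t u iht ihu => simp only [Term.val, iht, ihu, h.emb_add]
  | mul t u iht ihu => simp only [Term.val, iht, ihu, h.emb_mul]

lemma val_tTerm (w : ℕ → M.carrier) (k : ℕ) :
    Term.val M w (tTerm k) = emb M (10 * (k * k)) := by
  rw [show Term.val M w (tTerm k) = M.mul (Term.val M w (numeral 10))
      (M.mul (Term.val M w (numeral k)) (Term.val M w (numeral k))) from rfl,
    val_numeral, val_numeral, h.emb_mul, h.emb_mul]

omit h in
lemma update_emb (w : ℕ → ℕ) (i a : ℕ) :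
    Function.update (fun x => emb M (w x)) i (emb M a) = fun x => emb M (Function.update w i a x) := by
  funext x
  by_cases hxi : x = i
  · subst hxi; simp
  · simp [Function.update_of_ne hxi]

lemma delta0_abs : ∀ {μ : Formula}, IsDelta0 μ → ∀ (w : ℕ → ℕ),
    (Formula.Realize M (fun x => emb M (w x)) μ ↔ Formula.Realize stdModel w μ) := by
  intro μ hμ
  induction hμ with
  | eq t u =>
      intro w
      simp only [Formula.Realize, h.val_emb]
      exact ⟨fun hh => h.emb_inj hh, fun hh => by rw [hh]⟩
  | lt t u =>
      intro w
      simp only [Formula.Realize, h.val_emb, h.emb_lt_iff]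
  | not _ ih => intro w; simp only [Formula.Realize, ih]
  | and _ _ ih1 ih2 => intro w; simp only [Formula.Realize, ih1, ih2]
  | or _ _ ih1 ih2 => intro w; simp only [Formula.Realize, ih1, ih2]
  | imp _ _ ih1 ih2 => intro w; simp only [Formula.Realize, ih1, ih2]
  | @ball φ i t hit hφ ih =>
      intro w
      have hvM : ∀ (a : M.carrier),
          Term.val M (Function.update (fun x => emb M (w x)) i a) t
            = emb M (Term.val stdModel w t) := by
        intro a
        have := val_congr M t (w := Function.update (fun x => emb M (w x)) i a)
          (w' := fun x => emb M (w x)) (fun x hx => by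
            have hxi : x ≠ i := fun hxi => hit (hxi ▸ hx)
            exact Function.update_of_ne hxi _ _)
        rw [this, h.val_emb]
      have hvω : ∀ (a : ℕ),
          Term.val stdModel (Function.update w i a) t = Term.val stdModel w t := by
        intro a
        exact val_congr stdModel t (fun x hx => by
          have hxi : x ≠ i := fun hxi => hit (hxi ▸ hx)
          exact Function.update_of_ne hxi _ _)
      simp only [Formula.Realize, Term.val]
      constructor
      · intro H a
        rw [Function.update_self, hvω]
        intro ha
        have h1 := H (emb M a)
        rw [Function.update_self, hvM] at h1
        have h2 := h1 ((h.emb_lt_iff a _).mpr ha)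
        rw [update_emb] at h2
        exact (ih (Function.update w i a)).mp h2
      · intro H x
        rw [Function.update_self, hvM]
        intro hx
        obtain ⟨a, ha, rfl⟩ := h.lt_emb_elim _ x hx
        have h1 := H a
        rw [Function.update_self, hvω] at h1
        have h2 := (ih (Function.update w i a)).mpr (h1 ha)
        rw [update_emb]
        exact h2
  | @bex φ i t hit hφ ih =>
      intro w
      have hvM : ∀ (a : M.carrier),
          Term.val M (Function.update (fun x => emb M (w x)) i a) t
            = emb M (Term.val stdModel w t) := by
        intro a
        have := val_congr M t (w := Function.update (fun x => emb M (w x)) i a)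
          (w' := fun x => emb M (w x)) (fun x hx => by
            have hxi : x ≠ i := fun hxi => hit (hxi ▸ hx)
            exact Function.update_of_ne hxi _ _)
        rw [this, h.val_emb]
      have hvω : ∀ (a : ℕ),
          Term.val stdModel (Function.update w i a) t = Term.val stdModel w t := by
        intro a
        exact val_congr stdModel t (fun x hx => by
          have hxi : x ≠ i := fun hxi => hit (hxi ▸ hx)
          exact Function.update_of_ne hxi _ _)
      simp only [Formula.Realize, Term.val]
      constructor
      · rintro ⟨x, hx, hφx⟩
        rw [Function.update_self, hvM] at hx
        obtain ⟨a, ha, rfl⟩ := h.lt_emb_elim _ x hx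
        rw [update_emb] at hφx
        refine ⟨a, ?_, (ih (Function.update w i a)).mp hφx⟩
        rw [Function.update_self, hvω]
        exact ha
      · rintro ⟨a, ha, hφa⟩
        rw [Function.update_self, hvω] at ha
        refine ⟨emb M a, ?_, ?_⟩
        · rw [Function.update_self, hvM]
          exact (h.emb_lt_iff a _).mpr ha
        · rw [update_emb]
          exact (ih (Function.update w i a)).mpr hφa

end QM
/-- **Syntactic version of Gödel's first incompleteness theorem, part (ii).**
If T is an ω-consistent recursively axiomatizable extension of Q (with φ a Σ₁ formula
defining B), then T does not prove φ(n,t). -/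
theorem syntactic_incompleteness_ii
    (T : Set Formula) (hTsent : ∀ σ ∈ T, σ.IsSentence)
    (hQT : QAxioms ⊆ T) (hrec : RecursivelyAxiomatizable T)
    (hcons : Consistent T) (homega : OmegaConsistent T)
    (g : ℕ → ℕ) (hg : GoodBound g)
    (φ : Formula) (hφ : DefinesRel φ (BRel T g)) (hφ2 : 2 ∉ φ.allVars)
    (k₂ : ℕ) (hk₂ : (psiOf φ).countFreeOcc 1 < k₂)
    (k : ℕ) (hk : k = (psiOf φ).length * k₂)
    (n : ℕ) (hn : ¬ Nameable T (10 * (k * k)) n)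
    (hleast : ∀ m < n, Nameable T (10 * (k * k)) m)
    (hphiSigma : IsSigma1 φ) :
    ¬ Proves T ((φ.subst 0 (numeral n)).subst 1 (tTerm k)) := by
  intro hpf
  obtain ⟨i, μ, hμ, rfl⟩ := hphiSigma
  -- the free variables of μ are among 0, 1, i
  have hfree : ∀ x ∈ μ.freeVars, x = i ∨ (x ≠ i ∧ (x = 0 ∨ x = 1)) := by
    intro x hx
    by_cases hxi : x = i
    · exact Or.inl hxi
    · refine Or.inr ⟨hxi, ?_⟩
      have hmem : x ∈ (Formula.ex i μ).freeVars := by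
        simp only [Formula.freeVars]
        exact Finset.mem_erase.mpr ⟨hxi, hx⟩
      have := hφ.1 hmem
      simpa using this
  -- φ(n, 𝐭) is false in the standard model
  have hfalse : ¬ IsTrue (((Formula.ex i μ).subst 0 (numeral n)).subst 1
      (numeral (10 * (k * k)))) := by
    intro h
    refine hn ?_
    obtain ⟨ρ, _, hl, hname⟩ := (hφ.2 n (10 * (k * k))).mpr h
    exact ⟨ρ, hl, hname⟩
  -- hence μ is false in ω under any suitable assignment
  have key : ∀ w : ℕ → ℕ, (i = 1 ∨ w 1 = 10 * (k * k)) → (i = 0 ∨ w 0 = n) →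
      ¬ Formula.Realize stdModel w μ := by
    intro w h1 h0 hw
    apply hfalse
    intro u
    rw [realize_subst stdModel (numeral (10 * (k * k))) (numeral_closed _) _ u 1,
      val_numeral, emb_std,
      realize_subst stdModel (numeral n) (numeral_closed _) _ _ 0,
      val_numeral, emb_std]
    simp only [Formula.Realize]
    refine ⟨w i, (realize_congr stdModel μ ?_).mpr hw⟩
    intro x hx
    rcases hfree x hx with rfl | ⟨hxi, rfl | rfl⟩
    · simp
    · have hi0 : i ≠ 0 := fun h => hxi h.symm
      have : w 0 = n := h0.resolve_left hi0
      simp [Function.update, hxi, this]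
    · have hi1 : i ≠ 1 := fun h => hxi h.symm
      have : w 1 = 10 * (k * k) := h1.resolve_left hi1
      simp [Function.update, hxi, this]
  by_cases hi0 : i = 0
  · -- case i = 0
    subst hi0
    have hψ : ((Formula.ex 0 μ).subst 0 (numeral n)).subst 1 (tTerm k)
        = Formula.ex 0 (μ.subst 1 (tTerm k)) := by
      simp [Formula.subst]
    rw [hψ] at hpf
    obtain ⟨j, hj⟩ := homega 0 _ hpf
    apply hj
    intro M v hMv
    have hQM : QM M := qm_of M v fun σ hσ => hMv σ (hQT hσ)
    simp only [Formula.Realize]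
    intro hr
    rw [realize_subst M (numeral j) (numeral_closed j) _ v 0, val_numeral] at hr
    rw [realize_subst M (tTerm k) (tTerm_closed k) _ _ 1, hQM.val_tTerm] at hr
    have hr' : Formula.Realize M (fun x => emb M
        (Function.update (Function.update (fun _ => 0) 0 j) 1 (10 * (k * k)) x)) μ := by
      refine (realize_congr M μ ?_).mpr hr
      intro x hx
      rcases hfree x hx with rfl | ⟨hxi, rfl | rfl⟩
      · simp [Function.update]
      · exact absurd rfl hxi
      · simp [Function.update]
    have hstd := (hQM.delta0_abs hμ _).mp hr'
    exact key _ (Or.inr (by simp [Function.update])) (Or.inl rfl) hstd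
  · by_cases hi1 : i = 1
    · -- case i = 1
      subst hi1
      have hψ : ((Formula.ex 1 μ).subst 0 (numeral n)).subst 1 (tTerm k)
          = Formula.ex 1 (μ.subst 0 (numeral n)) := by
        simp [Formula.subst]
      rw [hψ] at hpf
      obtain ⟨j, hj⟩ := homega 1 _ hpf
      apply hj
      intro M v hMv
      have hQM : QM M := qm_of M v fun σ hσ => hMv σ (hQT hσ)
      simp only [Formula.Realize]
      intro hr
      rw [realize_subst M (numeral j) (numeral_closed j) _ v 1, val_numeral] at hr
      rw [realize_subst M (numeral n) (numeral_closed n) _ _ 0, val_numeral] at hr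
      have hr' : Formula.Realize M (fun x => emb M
          (Function.update (Function.update (fun _ => 0) 1 j) 0 n x)) μ := by
        refine (realize_congr M μ ?_).mpr hr
        intro x hx
        rcases hfree x hx with rfl | ⟨hxi, rfl | rfl⟩
        · simp [Function.update]
        · simp [Function.update]
        · exact absurd rfl hxi
      have hstd := (hQM.delta0_abs hμ _).mp hr'
      exact key _ (Or.inl rfl) (Or.inr (by simp [Function.update])) hstd
    · -- case i ∉ {0, 1}
      have hψ : ((Formula.ex i μ).subst 0 (numeral n)).subst 1 (tTerm k)
          = Formula.ex i ((μ.subst 0 (numeral n)).subst 1 (tTerm k)) := by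
        simp [Formula.subst, hi0, hi1]
      rw [hψ] at hpf
      obtain ⟨j, hj⟩ := homega i _ hpf
      apply hj
      intro M v hMv
      have hQM : QM M := qm_of M v fun σ hσ => hMv σ (hQT hσ)
      simp only [Formula.Realize]
      intro hr
      rw [realize_subst M (numeral j) (numeral_closed j) _ v i, val_numeral] at hr
      rw [realize_subst M (tTerm k) (tTerm_closed k) _ _ 1, hQM.val_tTerm] at hr
      rw [realize_subst M (numeral n) (numeral_closed n) _ _ 0, val_numeral] at hr
      have hr' : Formula.Realize M (fun x => emb M
          (Function.update (Function.update (Function.update (fun _ => 0) i j) 1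
            (10 * (k * k))) 0 n x)) μ := by
        refine (realize_congr M μ ?_).mpr hr
        intro x hx
        rcases hfree x hx with rfl | ⟨hxi, rfl | rfl⟩
        · simp [Function.update, hi0, hi1]
        · simp [Function.update, hxi, Ne.symm hxi]
        · simp [Function.update, hxi, Ne.symm hxi]
      have hstd := (hQM.delta0_abs hμ _).mp hr'
      refine key _ (Or.inr ?_) (Or.inr ?_) hstd
      · simp [Function.update]
      · simp [Function.update]

end Boolos
end

section
/- Let T be an extension of Robinson arithmetic Q with Pr_T definable and let φ define the relation B as in Boolos's construction. For any natural number i and closed term s with value 𝐬, the sentence φ(i,s) is true in ω if and only if there is a formula μ with at most the free variable v₀ such that |μ| < 𝐬 and μ names i. Consequently, ψ(i,s) is true in ω if and only if i is the least natural number that cannot be named by a formula of length < 𝐬. -/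
/-!
By the choice of `φ`, the sentence `φ(i, s)` is true in `ω` iff `(i, 𝐬) ∈ B`: after the closed
terms are substituted, `φ` is evaluated at an assignment sending `v₀ ↦ i` and `v₁ ↦ 𝐬`, and only
those two variables are free in it. The same holds for `ψ`, whose bounded quantifier `∀v₂ < v₀`
causes no capture since `v₂` does not occur in `φ`.

It remains to see that `B` is just "nameable by a formula of length `< j`". A formula `μ` of length
`< j` has fewer than `j` variables, so some injective renaming fixing `v₀` moves all of them below
`j`. Renaming preserves length and, since the axioms of `T` are sentences, provability; so the
renamed formula still names `i`, and it now satisfies `⌜μ⌝ < g(j)` by the choice of `g`.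
-/

namespace Boolos

namespace Term

theorem val_congr {M : Struct} {v w : ℕ → M.carrier} (t : Term)
    (h : ∀ x ∈ t.varsOf, v x = w x) : t.val M v = t.val M w := by
  induction t <;> simp_all [Term.val, Term.varsOf]

theorem val_eq_valNat {t : Term} (ht : t.varsOf = ∅) (v : ℕ → ℕ) :
    t.val stdModel v = t.valNat :=
  t.val_congr (by simp [ht])

theorem val_subst {M : Struct} (t : Term) (x : ℕ) (u : Term) (v : ℕ → M.carrier) :
    (t.subst x u).val M v = t.val M (Function.update v x (u.val M v)) := by
  induction t with
  | var i => by_cases h : i = x <;> simp [Term.subst, Term.val, h]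
  | _ => simp_all [Term.subst, Term.val]

theorem varsOf_numeral (n : ℕ) : (numeral n).varsOf = ∅ := by
  induction n <;> simp [numeral, Term.varsOf, *]

theorem valNat_numeral (n : ℕ) : (numeral n).valNat = n := by
  induction n <;> simp_all [numeral, Term.valNat, Term.val]

end Term

namespace Formula

theorem realize_congr {M : Struct} (φ : Formula) {v w : ℕ → M.carrier}
    (h : ∀ x ∈ φ.freeVars, v x = w x) : φ.Realize M v ↔ φ.Realize M w := by
  induction φ generalizing v w with
  | eq t u | lt t u =>
    simp only [Formula.Realize]
    rw [t.val_congr fun x hx => h x (by simp [Formula.freeVars, hx]),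
      u.val_congr fun x hx => h x (by simp [Formula.freeVars, hx])]
  | not φ ih => simp only [Formula.Realize, ih h]
  | and φ ψ ihφ ihψ | or φ ψ ihφ ihψ | imp φ ψ ihφ ihψ =>
    simp only [Formula.Realize]
    rw [ihφ fun x hx => h x (by simp [Formula.freeVars, hx]),
      ihψ fun x hx => h x (by simp [Formula.freeVars, hx])]
  | all i φ ih | ex i φ ih =>
    have hupdate (a : M.carrier) :
        ∀ x ∈ φ.freeVars, Function.update v i a x = Function.update w i a x := by
      intro x hx
      by_cases hxi : x = i
      · simp [hxi]
      · simpa [hxi] using h x (by simp [Formula.freeVars, hxi, hx])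
    simp only [Formula.Realize]
    first
      | exact forall_congr' fun a => ih (hupdate a)
      | exact exists_congr fun a => ih (hupdate a)

theorem realize_subst {M : Struct} (ψ : Formula) (x : ℕ) {t : Term}
    (ht : Disjoint t.varsOf ψ.allVars) (v : ℕ → M.carrier) :
    (ψ.subst x t).Realize M v ↔ ψ.Realize M (Function.update v x (t.val M v)) := by
  induction ψ generalizing v with
  | eq a b | lt a b => simp [Formula.subst, Formula.Realize, Term.val_subst]
  | not φ ih => simp only [Formula.subst, Formula.Realize, ih ht]
  | and φ ψ ihφ ihψ | or φ ψ ihφ ihψ | imp φ ψ ihφ ihψ =>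
    rw [Formula.allVars, Finset.disjoint_union_right] at ht
    simp only [Formula.subst, Formula.Realize, ihφ ht.1, ihψ ht.2]
  | all i φ ih | ex i φ ih =>
    rw [Formula.allVars, Finset.disjoint_insert_right] at ht
    by_cases hix : i = x
    · subst hix
      simp [Formula.subst, Formula.Realize]
    · have hval (a : M.carrier) : t.val M (Function.update v i a) = t.val M v :=
        t.val_congr fun y hy => Function.update_of_ne (ne_of_mem_of_not_mem hy ht.1) _ _
      simp only [Formula.subst, if_neg hix, Formula.Realize, ih ht.2, hval,
        Function.update_comm hix]

end Formula

theorem isTrue_subst_subst_iff (χ : Formula) (i : ℕ) {s : Term} (hs : s.varsOf = ∅) :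
    IsTrue ((χ.subst 0 (numeral i)).subst 1 s) ↔
      ∀ v : ℕ → ℕ, χ.Realize stdModel (Function.update (Function.update v 1 s.valNat) 0 i) := by
  refine forall_congr' fun v => ?_
  rw [Formula.realize_subst _ 1 (by simp [hs]),
    Formula.realize_subst _ 0 (by simp [Term.varsOf_numeral]), Term.val_eq_valNat hs,
    Term.val_eq_valNat (Term.varsOf_numeral i), Term.valNat_numeral]

theorem DefinesRel.realize_iff {φ : Formula} {R : ℕ → ℕ → Prop} (hφ : DefinesRel φ R)
    (v : ℕ → ℕ) : φ.Realize stdModel v ↔ R (v 0) (v 1) := by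
  rw [hφ.2, isTrue_subst_subst_iff _ _ (Term.varsOf_numeral _), Term.valNat_numeral]
  refine ⟨fun h w => (φ.realize_congr fun x hx => ?_).1 h, fun h => by simpa using h v⟩
  rcases Finset.mem_insert.1 (hφ.1 hx) with rfl | hx1
  · simp
  · simp [Finset.mem_singleton.1 hx1]

theorem realize_psiOf_iff {φ : Formula} {R : ℕ → ℕ → Prop} (hφ : DefinesRel φ R)
    (hφ2 : 2 ∉ φ.allVars) (v : ℕ → ℕ) :
    (psiOf φ).Realize stdModel v ↔ ¬ R (v 0) (v 1) ∧ ∀ a < v 0, R a (v 1) := by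
  simp only [psiOf, Formula.Realize,
    Formula.realize_subst φ 0 (t := v2) (by simpa [v2, Term.varsOf]), hφ.realize_iff]
  simp [v2, v0, Term.val]

def Term.rename (f : ℕ → ℕ) : Term → Term
  | .var i => .var (f i)
  | .zero => .zero
  | .succ t => .succ (t.rename f)
  | .add t u => .add (t.rename f) (u.rename f)
  | .mul t u => .mul (t.rename f) (u.rename f)

def Formula.rename (f : ℕ → ℕ) : Formula → Formula
  | .eq t u => .eq (t.rename f) (u.rename f)
  | .lt t u => .lt (t.rename f) (u.rename f)
  | .not φ => .not (φ.rename f)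
  | .and φ ψ => .and (φ.rename f) (ψ.rename f)
  | .or φ ψ => .or (φ.rename f) (ψ.rename f)
  | .imp φ ψ => .imp (φ.rename f) (ψ.rename f)
  | .all i φ => .all (f i) (φ.rename f)
  | .ex i φ => .ex (f i) (φ.rename f)

namespace Term

variable (f : ℕ → ℕ)

theorem val_rename {M : Struct} (t : Term) (v : ℕ → M.carrier) :
    (t.rename f).val M v = t.val M (v ∘ f) := by
  induction t <;> simp_all [Term.rename, Term.val]

theorem length_symbols_rename (t : Term) : (t.rename f).symbols.length = t.symbols.length := by
  induction t <;> simp [Term.rename, Term.symbols, *]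

theorem varsOf_rename (t : Term) : (t.rename f).varsOf = t.varsOf.image f := by
  induction t <;> simp [Term.rename, Term.varsOf, Finset.image_union, *]

theorem rename_numeral (n : ℕ) : (numeral n).rename f = numeral n := by
  induction n <;> simp [numeral, Term.rename, *]

theorem card_varsOf_le_length_symbols (t : Term) : t.varsOf.card ≤ t.symbols.length := by
  induction t with
  | var | zero => simp [Term.varsOf, Term.symbols]
  | succ t ih => simpa [Term.varsOf, Term.symbols] using ih.trans (Nat.le_succ _)
  | add t u iht ihu | mul t u iht ihu =>
    simp only [Term.varsOf, Term.symbols, List.length_append, List.length_cons]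
    linarith [Finset.card_union_le t.varsOf u.varsOf]

end Term

namespace Formula

theorem realize_rename {M : Struct} {f : ℕ → ℕ} (hf : Function.Injective f) (φ : Formula)
    (v : ℕ → M.carrier) : (φ.rename f).Realize M v ↔ φ.Realize M (v ∘ f) := by
  induction φ generalizing v with
  | all i φ ih | ex i φ ih =>
    simp only [Formula.rename, Formula.Realize, ih, Function.update_comp_eq_of_injective _ hf]
  | _ => simp_all [Formula.rename, Formula.Realize, Term.val_rename]

variable (f : ℕ → ℕ)

theorem length_rename (φ : Formula) : (φ.rename f).length = φ.length := by
  unfold Formula.length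
  induction φ <;> simp [Formula.rename, Formula.symbols, Term.length_symbols_rename, *]

theorem allVars_rename (φ : Formula) : (φ.rename f).allVars = φ.allVars.image f := by
  induction φ <;>
    simp [Formula.rename, Formula.allVars, Term.varsOf_rename, Finset.image_union,
      Finset.image_insert, *]

theorem freeVars_rename_subset (φ : Formula) :
    (φ.rename f).freeVars ⊆ φ.freeVars.image f := by
  induction φ with
  | eq t u | lt t u =>
    simp [Formula.rename, Formula.freeVars, Term.varsOf_rename, Finset.image_union]
  | not φ ih => exact ih
  | and φ ψ ihφ ihψ | or φ ψ ihφ ihψ | imp φ ψ ihφ ihψ =>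
    simpa only [Formula.rename, Formula.freeVars, Finset.image_union] using
      Finset.union_subset_union ihφ ihψ
  | all i φ ih | ex i φ ih =>
    intro x hx
    obtain ⟨hxi, hx⟩ := Finset.mem_erase.1 hx
    obtain ⟨y, hy, rfl⟩ := Finset.mem_image.1 (ih hx)
    exact Finset.mem_image_of_mem f (Finset.mem_erase.2 ⟨fun h => hxi (h ▸ rfl), hy⟩)

theorem card_allVars_le_length (φ : Formula) : φ.allVars.card ≤ φ.length := by
  unfold Formula.length
  induction φ with
  | eq t u | lt t u =>
    simp only [Formula.allVars, Formula.symbols, List.length_append, List.length_cons]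
    linarith [Finset.card_union_le t.varsOf u.varsOf, t.card_varsOf_le_length_symbols,
      u.card_varsOf_le_length_symbols]
  | not φ ih => simpa [Formula.allVars, Formula.symbols] using ih.trans (Nat.le_succ _)
  | and φ ψ ihφ ihψ | or φ ψ ihφ ihψ | imp φ ψ ihφ ihψ =>
    simp only [Formula.allVars, Formula.symbols, List.length_append, List.length_cons]
    linarith [Finset.card_union_le φ.allVars ψ.allVars]
  | all i φ ih | ex i φ ih =>
    simp only [Formula.allVars, Formula.symbols, List.length_cons]
    linarith [Finset.card_insert_le i φ.allVars]

end Formula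

theorem exists_injective_map_zero_mapsTo_range {S : Finset ℕ} {j : ℕ} (hS : S.card < j) :
    ∃ f : ℕ → ℕ, Function.Injective f ∧ f 0 = 0 ∧ ∀ x ∈ S, f x < j := by
  classical
  set A := insert 0 S
  have hA : A.card ≤ j := (Finset.card_insert_le 0 S).trans hS
  let rank (x : ℕ) : ℕ := (A.filter fun y => y < x).card
  have rank_lt {x : ℕ} (hx : x ∈ A) : rank x < j := by
    have : (A.filter fun y => y < x) ⊂ A := Finset.filter_ssubset.2 ⟨x, hx, lt_irrefl x⟩
    exact (Finset.card_lt_card this).trans_le hA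
  have rank_strictMonoOn : StrictMonoOn rank A := fun x hx y _ hxy => by
    have hsub : (A.filter fun z => z < x) ⊆ A.filter fun z => z < y :=
      Finset.monotone_filter_right A fun _ _ h => h.trans hxy
    exact Finset.card_lt_card
      ((Finset.ssubset_iff_of_subset hsub).2 ⟨x, Finset.mem_filter.2 ⟨hx, hxy⟩, by simp⟩)
  refine ⟨fun x => if x ∈ A then rank x else j + x, fun x y hxy => ?_, by simp [A, rank], ?_⟩
  · by_cases hx : x ∈ A <;> by_cases hy : y ∈ A <;> simp only [hx, hy, if_true, if_false] at hxy
    · exact rank_strictMonoOn.injOn hx hy hxy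
    · linarith [rank_lt hx]
    · linarith [rank_lt hy]
    · omega
  · intro x hx
    have hxA : x ∈ A := Finset.mem_insert_of_mem hx
    simpa only [hxA, if_true] using rank_lt hxA

theorem Proves.rename {T : Set Formula} (hT : ∀ σ ∈ T, σ.IsSentence) {f : ℕ → ℕ}
    (hf : Function.Injective f) {σ : Formula} (h : Proves T σ) : Proves T (σ.rename f) := by
  intro M v hv
  rw [Formula.realize_rename hf]
  refine h M (v ∘ f) fun τ hτ => (τ.realize_congr fun x hx => ?_).1 (hv τ hτ)
  rw [show τ.freeVars = ∅ from hT τ hτ] at hx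
  exact absurd hx (Finset.notMem_empty x)

theorem Names.rename {T : Set Formula} (hT : ∀ σ ∈ T, σ.IsSentence) {f : ℕ → ℕ}
    (hf : Function.Injective f) (hf0 : f 0 = 0) {μ : Formula} {i : ℕ} (h : Names T μ i) :
    Names T (μ.rename f) i := by
  refine ⟨(μ.freeVars_rename_subset f).trans ?_, ?_⟩
  · simpa [hf0] using Finset.image_subset_image (f := f) h.1
  · simpa [Formula.rename, Formula.iffF, Term.rename, v0, hf0, Term.rename_numeral] using
      h.2.rename hT hf

theorem bRel_iff_nameable {T : Set Formula} (hT : ∀ σ ∈ T, σ.IsSentence) {g : ℕ → ℕ}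
    (hg : GoodBound g) (i j : ℕ) : BRel T g i j ↔ Nameable T j i := by
  refine ⟨fun ⟨μ, _, hμ⟩ => ⟨μ, hμ⟩, fun ⟨μ, hlen, hμ⟩ => ?_⟩
  obtain ⟨f, hf, hf0, hfj⟩ :=
    exists_injective_map_zero_mapsTo_range (μ.card_allVars_le_length.trans_lt hlen)
  have hvars : (μ.rename f).allVars ⊆ Finset.range j := by
    simpa [Formula.allVars_rename, Finset.image_subset_iff] using hfj
  rw [← μ.length_rename f] at hlen
  exact ⟨μ.rename f, hg.2 _ j hvars hlen, hlen, hμ.rename hT hf hf0⟩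

theorem phi_psi_meaning_general
    (T : Set Formula) (hTsent : ∀ σ ∈ T, σ.IsSentence)
    (g : ℕ → ℕ) (hg : GoodBound g)
    (φ : Formula) (hφ : DefinesRel φ (BRel T g)) (hφ2 : 2 ∉ φ.allVars)
    (i : ℕ) (s : Term) (hs : s.varsOf = ∅) :
    (IsTrue ((φ.subst 0 (numeral i)).subst 1 s) ↔
        ∃ μ : Formula, μ.length < s.valNat ∧ Names T μ i) ∧
      (IsTrue (((psiOf φ).subst 0 (numeral i)).subst 1 s) ↔
        ¬ Nameable T s.valNat i ∧ ∀ m < i, Nameable T s.valNat m) := by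
  simp only [isTrue_subst_subst_iff _ i hs, hφ.realize_iff, realize_psiOf_iff hφ hφ2,
    Function.update_self, Function.update_of_ne one_ne_zero, bRel_iff_nameable hTsent hg,
    forall_const, Nameable, and_self]

/-- The meaning of φ and ψ: for any number i and closed term s with value 𝐬, φ(i,s) is
true iff some formula μ with at most the free variable v₀ and |μ| < 𝐬 names i, and
ψ(i,s) is true iff i is the least number not nameable by a formula of length < 𝐬. -/
theorem phi_psi_meaning
    (T : Set Formula) (hTsent : ∀ σ ∈ T, σ.IsSentence)
    (hQT : QAxioms ⊆ T) (hdef : Definable (PrSet T))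
    (g : ℕ → ℕ) (hg : GoodBound g)
    (φ : Formula) (hφ : DefinesRel φ (BRel T g)) (hφ2 : 2 ∉ φ.allVars)
    (i : ℕ) (s : Term) (hs : s.varsOf = ∅) :
    (IsTrue ((φ.subst 0 (numeral i)).subst 1 s) ↔
        ∃ μ : Formula, μ.length < s.valNat ∧ Names T μ i) ∧
      (IsTrue (((psiOf φ).subst 0 (numeral i)).subst 1 s) ↔
        ¬ Nameable T s.valNat i ∧ ∀ m < i, Nameable T s.valNat m) :=
  phi_psi_meaning_general T hTsent g hg φ hφ hφ2 i s hs

end Boolos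
end
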